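/- arXiv:quant-ph/0308040 — 3 statements merged into one kernel-verified Lean document; each statement's English description precedes it below -/
import Mathlib

section
/- Define a classical eigenfunction with eigenvalue ℰ to be a smooth φ satisfying -Σ_j (∂W/∂q_j)(∂φ/∂q_j) = ℰ φ. If φ_n is a classical eigenfunction with eigenvalue ℰ_n and φ_m is a classical eigenfunction with eigenvalue ℰ_m, then the pointwise product φ_n·φ_m is a classical eigenfunction with eigenvalue ℰ_n + ℰ_m. -/
/-- Partial derivative of `f` in the `j`-th coordinate direction. -/
noncomputable def pd (r : ℕ) (j : Fin r) (f : EuclideanSpace ℝ (Fin r) → ℝ)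
    (q : EuclideanSpace ℝ (Fin r)) : ℝ :=
  fderiv ℝ f q (EuclideanSpace.single j 1)

theorem product_of_classical_eigenfunctions (r : ℕ)
    (W φn φm : EuclideanSpace ℝ (Fin r) → ℝ)
    (hW : ContDiff ℝ (⊤ : ℕ∞) W) (hφn : ContDiff ℝ (⊤ : ℕ∞) φn) (hφm : ContDiff ℝ (⊤ : ℕ∞) φm)
    (En Em : ℝ)
    (hn : ∀ q, -∑ j, pd r j W q * pd r j φn q = En * φn q)
    (hm : ∀ q, -∑ j, pd r j W q * pd r j φm q = Em * φm q) :
    ∀ q, -∑ j, pd r j W q * pd r j (fun x => φn x * φm x) q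
      = (En + Em) * (φn q * φm q) := by
  intro q
  have hdn : DifferentiableAt ℝ φn q := (hφn.differentiable (by simp)) q
  have hdm : DifferentiableAt ℝ φm q := (hφm.differentiable (by simp)) q
  have key : ∀ j, pd r j (fun x => φn x * φm x) q
      = pd r j φn q * φm q + φn q * pd r j φm q := by
    intro j
    simp only [pd, fderiv_fun_mul hdn hdm, ContinuousLinearMap.add_apply,
      ContinuousLinearMap.smul_apply, smul_eq_mul]
    ring
  have : ∑ j, pd r j W q * pd r j (fun x => φn x * φm x) q
      = (∑ j, pd r j W q * pd r j φn q) * φm q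
        + φn q * ∑ j, pd r j W q * pd r j φm q := by
    rw [Finset.sum_mul, Finset.mul_sum, ← Finset.sum_add_distrib]
    exact Finset.sum_congr rfl fun j _ => by rw [key j]; ring
  rw [this, neg_add, ← neg_mul, ← mul_neg, hn q, hm q]
  ring
end

section
/- Let φ be a classical eigenfunction with eigenvalue ℰ ≠ 0 (so -Σ_j (∂W/∂q_j)(∂φ/∂q_j) = ℰ φ) and let q̄ satisfy ∇W(q̄) = 0. Then the gradient vector v = ∇φ(q̄) satisfies -Σ_j (∂²W/∂q_k∂q_j)(q̄) · v_j = ℰ v_k for every k; that is, v is an eigenvector of the negative Hessian matrix of W at q̄ with eigenvalue ℰ (or v = 0). -/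
lemma pd_smooth {r : ℕ} (j : Fin r) {f : EuclideanSpace ℝ (Fin r) → ℝ}
    (hf : ContDiff ℝ (⊤ : ℕ∞) f) : ContDiff ℝ (⊤ : ℕ∞) (pd r j f) :=
  (hf.fderiv_right (m := (⊤ : ℕ∞)) le_rfl).clm_apply contDiff_const

theorem gradient_is_hessian_eigenvector (r : ℕ)
    (W φ : EuclideanSpace ℝ (Fin r) → ℝ)
    (hW : ContDiff ℝ (⊤ : ℕ∞) W) (hφ : ContDiff ℝ (⊤ : ℕ∞) φ)
    (ℰ : ℝ) (hℰ : ℰ ≠ 0)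
    (heig : ∀ q, -∑ j, pd r j W q * pd r j φ q = ℰ * φ q)
    (qbar : EuclideanSpace ℝ (Fin r))
    (heq : ∀ j, pd r j W qbar = 0) :
    ∀ k, -∑ j, pd r k (pd r j W) qbar * pd r j φ qbar
      = ℰ * pd r k φ qbar := by
  intro k
  have hWd : ∀ j, DifferentiableAt ℝ (pd r j W) qbar :=
    fun j => ((pd_smooth j hW).differentiable (by simp)).differentiableAt
  have hφd : ∀ j, DifferentiableAt ℝ (pd r j φ) qbar :=
    fun j => ((pd_smooth j hφ).differentiable (by simp)).differentiableAt
  have hmul : ∀ j : Fin r, DifferentiableAt ℝ (fun q => pd r j W q * pd r j φ q) qbar :=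
    fun j => (hWd j).mul (hφd j)
  have hfun : (fun q => -∑ j, pd r j W q * pd r j φ q) = fun q => ℰ * φ q :=
    funext heig
  have hD : fderiv ℝ (fun q => -∑ j, pd r j W q * pd r j φ q) qbar
      = fderiv ℝ (fun q => ℰ * φ q) qbar := by rw [hfun]
  have hL : fderiv ℝ (fun q => -∑ j, pd r j W q * pd r j φ q) qbar
      = -∑ j, (pd r j W qbar • fderiv ℝ (pd r j φ) qbar
          + pd r j φ qbar • fderiv ℝ (pd r j W) qbar) := by
    rw [fderiv_fun_neg, fderiv_fun_sum (fun j _ => hmul j)]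
    congr 1
    exact Finset.sum_congr rfl fun j _ => fderiv_fun_mul (hWd j) (hφd j)
  have hR : fderiv ℝ (fun q => ℰ * φ q) qbar = ℰ • fderiv ℝ φ qbar :=
    fderiv_const_mul ((hφ.differentiable (by simp)).differentiableAt) ℰ
  have happ := congrArg (fun L : EuclideanSpace ℝ (Fin r) →L[ℝ] ℝ =>
    L (EuclideanSpace.single k 1)) (hL ▸ hR ▸ hD)
  simp only [ContinuousLinearMap.neg_apply, ContinuousLinearMap.sum_apply,
    ContinuousLinearMap.add_apply, ContinuousLinearMap.smul_apply, smul_eq_mul] at happ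
  simp only [heq, zero_mul, zero_add] at happ
  calc -∑ j, pd r k (pd r j W) qbar * pd r j φ qbar
      = -∑ j, pd r j φ qbar * fderiv ℝ (pd r j W) qbar (EuclideanSpace.single k 1) := by
        simp [pd, mul_comm]
    _ = ℰ * pd r k φ qbar := by rw [happ]; rfl
end

section
/- For the Pöschl-Teller system, the function ψ_n(q) = (cosh q)^{n - g/ℏ} P_n^{(α,α)}(tanh q) with α = g/ℏ - n satisfies the Schrödinger equation -(ℏ²/2)ψ_n'' + (-g(g+ℏ)/(2cosh²q) + g²/2) ψ_n = E_n ψ_n with E_n = gnℏ - n²ℏ²/2, provided α > 0. -/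
private lemma tanh_hasDerivAt (q : ℝ) :
    HasDerivAt Real.tanh (1 - Real.tanh q ^ 2) q := by
  have h : HasDerivAt Real.tanh
      ((Real.cosh q * Real.cosh q - Real.sinh q * Real.sinh q) / (Real.cosh q)^2) q := by
    have htanh : Real.tanh = fun y => Real.sinh y / Real.cosh y :=
      funext Real.tanh_eq_sinh_div_cosh
    rw [htanh]
    exact (Real.hasDerivAt_sinh q).div (Real.hasDerivAt_cosh q) (Real.cosh_pos q).ne'
  convert h using 1
  have hc := (Real.cosh_pos q).ne'
  have hid := Real.cosh_sq_sub_sinh_sq q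
  rw [Real.tanh_eq_sinh_div_cosh]
  field_simp

private lemma key_deriv (β : ℝ) (f : ℝ → ℝ) (hf : Differentiable ℝ f) (q : ℝ) :
    HasDerivAt (fun q => Real.cosh q ^ β * f (Real.tanh q))
      (Real.cosh q ^ β * (β * Real.tanh q * f (Real.tanh q)
        + (1 - Real.tanh q ^ 2) * deriv f (Real.tanh q))) q := by
  have h1 : HasDerivAt (fun q => Real.cosh q ^ β)
      (β * Real.cosh q ^ β * Real.tanh q) q := by
    have h := (Real.hasDerivAt_rpow_const (x := Real.cosh q) (p := β)
      (Or.inl (Real.cosh_pos q).ne')).comp q (Real.hasDerivAt_cosh q)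
    refine h.congr_deriv ?_
    rw [Real.rpow_sub_one (Real.cosh_pos q).ne', Real.tanh_eq_sinh_div_cosh]
    first
    | (field_simp; ring)
    | field_simp
  have h2 : HasDerivAt (fun q => f (Real.tanh q))
      (deriv f (Real.tanh q) * (1 - Real.tanh q ^ 2)) q :=
    ((hf (Real.tanh q)).hasDerivAt).comp q (tanh_hasDerivAt q)
  have := h1.mul h2
  refine this.congr_deriv ?_
  ring

theorem poschl_teller_eigenfunctions (g ℏ : ℝ) (hg : 0 < g) (hℏ : 0 < ℏ)
    (n : ℕ) (α : ℝ) (hα : α = g / ℏ - n) (hαpos : 0 < α)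
    (P : ℝ → ℝ) (hP : ContDiff ℝ (⊤ : ℕ∞) P)
    -- `P` is the Jacobi polynomial `P_n^{(α,α)}`, characterized as a degree-`n`
    -- polynomial solution of the Jacobi differential equation
    (hPpoly : ∃ p : Polynomial ℝ, p.degree = n ∧ ∀ x, P x = p.eval x)
    (hODE : ∀ x, (1 - x^2) * deriv (deriv P) x - 2 * (α + 1) * x * deriv P x
        + (n : ℝ) * ((n : ℝ) + 2 * α + 1) * P x = 0)
    (ψ : ℝ → ℝ)
    (hψ : ∀ q, ψ q = Real.cosh q ^ ((n : ℝ) - g / ℏ) * P (Real.tanh q))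
    (E : ℝ) (hE : E = g * n * ℏ - n^2 * ℏ^2 / 2) :
    ∀ q, -(ℏ^2 / 2) * deriv (deriv ψ) q
        + (-g * (g + ℏ) / (2 * Real.cosh q ^ 2) + g^2 / 2) * ψ q
      = E * ψ q := by
  intro q
  set β : ℝ := (n : ℝ) - g / ℏ with hβdef
  have hβ : β = -α := by rw [hα]; ring
  have hP1 : ContDiff ℝ ((⊤ : ℕ∞) : WithTop ℕ∞) P := hP.of_le (mod_cast le_top)
  have hle : (1 : WithTop ℕ∞) ≤ ((⊤ : ℕ∞) : WithTop ℕ∞) := by exact_mod_cast le_top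
  have hPd : Differentiable ℝ P := hP1.differentiable (by simp)
  have hPd' : Differentiable ℝ (deriv P) := by
    have := hP1.iterate_deriv 1
    simpa using this.differentiable (by simp)
  have hPd'' : Differentiable ℝ (deriv (deriv P)) := by
    have := hP1.iterate_deriv 2
    simp only [Function.iterate_succ, Function.iterate_zero, Function.comp] at this
    exact this.differentiable (by simp)
  -- G is the "first derivative polynomial part"
  set G : ℝ → ℝ := fun x => β * x * P x + (1 - x ^ 2) * deriv P x with hGdef
  have hGder : ∀ x, HasDerivAt G
      (β * P x + β * x * deriv P x + (-(2 * x)) * deriv P x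
        + (1 - x ^ 2) * deriv (deriv P) x) x := by
    intro x
    have h1 : HasDerivAt (fun x : ℝ => β * x * P x) (β * P x + β * x * deriv P x) x := by
      have := (((hasDerivAt_id x).const_mul β)).mul (hPd x).hasDerivAt
      refine this.congr_deriv ?_
      simp only [id_eq]
      ring
    have h2 : HasDerivAt (fun x : ℝ => (1 - x ^ 2) * deriv P x)
        ((-(2 * x)) * deriv P x + (1 - x ^ 2) * deriv (deriv P) x) x := by
      have hq : HasDerivAt (fun x : ℝ => 1 - x ^ 2) (-(2 * x)) x := by
        have := ((hasDerivAt_pow 2 x).const_sub 1)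
        simpa using this
      exact hq.mul (hPd' x).hasDerivAt
    have := h1.add h2
    refine this.congr_deriv ?_
    ring
  have hGdiff : Differentiable ℝ G := fun x => (hGder x).differentiableAt
  have hψeq : ψ = fun q => Real.cosh q ^ β * P (Real.tanh q) := funext hψ
  -- first derivative
  have hd1 : ∀ q, HasDerivAt ψ (Real.cosh q ^ β * G (Real.tanh q)) q := by
    intro q
    rw [hψeq]
    have := key_deriv β P hPd q
    convert this using 1
  have hdψ : deriv ψ = fun q => Real.cosh q ^ β * G (Real.tanh q) :=
    funext fun q => (hd1 q).deriv
  -- second derivative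
  have hd2 : HasDerivAt (deriv ψ)
      (Real.cosh q ^ β * (β * Real.tanh q * G (Real.tanh q)
        + (1 - Real.tanh q ^ 2) * deriv G (Real.tanh q))) q := by
    rw [hdψ]
    exact key_deriv β G hGdiff q
  have hderiv2 : deriv (deriv ψ) q
      = Real.cosh q ^ β * (β * Real.tanh q * G (Real.tanh q)
        + (1 - Real.tanh q ^ 2) * deriv G (Real.tanh q)) := hd2.deriv
  set t : ℝ := Real.tanh q with htdef
  set c : ℝ := Real.cosh q with hcdef
  have hc : 0 < c := Real.cosh_pos q
  have ht2 : 1 - t ^ 2 = (c ^ 2)⁻¹ := by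
    have hid := Real.cosh_sq_sub_sinh_sq q
    have ht : t = Real.sinh q / c := Real.tanh_eq_sinh_div_cosh q
    rw [ht]
    field_simp
    nlinarith [hid]
  have hGd : deriv G t = β * P t + β * t * deriv P t + (-(2 * t)) * deriv P t
      + (1 - t ^ 2) * deriv (deriv P) t := (hGder t).deriv
  have hgval : g = ℏ * ((n : ℝ) + α) := by
    field_simp at hα
    linarith [hα]
  have hpot : -g * (g + ℏ) / (2 * c ^ 2) = -g * (g + ℏ) * (1 - t ^ 2) / 2 := by
    rw [ht2]
    field_simp
  have hODEt := hODE t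
  rw [hderiv2, hψ q, hGd]
  simp only [← htdef, ← hcdef, hGdef]
  rw [hβ, hE, hpot, hgval]
  linear_combination (-(ℏ ^ 2 / 2) * c ^ (-α) * (1 - t ^ 2)) * hODEt
end
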